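/- arXiv:math/0401279 — 6 statements merged into one kernel-verified Lean document; each statement's English description precedes it below -/
import Mathlib

section
/- (Lemma 1) Let f ∈ H and let c_n = ⟨β_n, f⟩ be the coefficients of the orthogonal projection of f onto V_N, i.e. P_N f = Σ_{n=1}^N c_n α_n. Fix j and define for n ≠ j the modified coefficients c̃_n = c_n − c_j ⟨β_n, β_j⟩ / ‖β_j‖², and set f̃ = Σ_{n≠j} c̃_n α_n. Then f − f̃ is orthogonal to the subspace Ṽ = span{α_n : n ≠ j}. -/
open scoped InnerProductSpace
open Finset

private lemma boomp_aux {H : Type*} [NormedAddCommGroup H] [Module ℂ H]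
    {N : ℕ} (g : Fin N → H) (j : Fin N) (f : H) (c q : Fin N → ℂ) (D : ℂ)
    (hD : D ≠ 0) (hqj : q j = D) :
    f - ∑ n ∈ Finset.univ.erase j, (c n - c j * q n / D) • g n
      = (f - ∑ n, c n • g n) + (c j / D) • ∑ n, q n • g n := by
  rw [Finset.smul_sum,
    ← Finset.sum_erase_add _ (fun n => c n • g n) (Finset.mem_univ j),
    ← Finset.sum_erase_add _ (fun n => (c j / D) • q n • g n) (Finset.mem_univ j)]
  have hterm : (c j / D) • q j • g j = c j • g j := by
    rw [hqj, smul_smul, div_mul_cancel₀ _ hD]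
  rw [hterm]
  have hterms : ∀ n ∈ Finset.univ.erase j,
      (c n - c j * q n / D) • g n = c n • g n - (c j / D) • q n • g n := by
    intro n _
    rw [sub_smul, smul_smul]
    ring_nf
  rw [Finset.sum_congr rfl hterms, Finset.sum_sub_distrib]
  abel

theorem boomp_stmt4 {H : Type*} [NormedAddCommGroup H] [InnerProductSpace ℂ H]
    {N : ℕ} (α β : Fin N → H) (j : Fin N) (f : H)
    (hli : LinearIndependent ℂ α)
    (hβmem : ∀ m, β m ∈ Submodule.span ℂ (Set.range α))
    (hbi : ∀ n m, ⟪α n, β m⟫_ℂ = if n = m then 1 else 0) :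
    ∀ v ∈ Submodule.span ℂ (α '' {m : Fin N | m ≠ j}),
      ⟪v, f - ∑ n ∈ Finset.univ.erase j,
        (⟪β n, f⟫_ℂ - ⟪β j, f⟫_ℂ * ⟪β n, β j⟫_ℂ / (‖β j‖ : ℂ) ^ 2) • α n⟫_ℂ
        = 0 := by
  have hbi' : ∀ m n, ⟪β m, α n⟫_ℂ = if n = m then 1 else 0 := by
    intro m n
    rw [← inner_conj_symm, hbi]
    simp [apply_ite (starRingEnd ℂ)]
  -- representation of elements of span α via β-coefficients
  have hrepr : ∀ g ∈ Submodule.span ℂ (Set.range α), g = ∑ n, ⟪β n, g⟫_ℂ • α n := by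
    intro g hg
    obtain ⟨b, hb⟩ := (Submodule.mem_span_range_iff_exists_fun ℂ).mp hg
    have hcoef : ∀ n, ⟪β n, g⟫_ℂ = b n := by
      intro n
      rw [← hb, inner_sum]
      simp [inner_smul_right, hbi']
    simp_rw [hcoef]
    exact hb.symm
  have hβj0 : β j ≠ 0 := by
    intro h
    have := hbi j j
    simp [h] at this
  have hnorm : ((‖β j‖ : ℂ)) ^ 2 ≠ 0 := by simp [hβj0]
  have hjj : ⟪β j, β j⟫_ℂ = (‖β j‖ : ℂ) ^ 2 := inner_self_eq_norm_sq_to_K (β j)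
  -- linear independence of β
  have hβli : LinearIndependent ℂ β := by
    rw [Fintype.linearIndependent_iff]
    intro g hg n
    have : ⟪α n, ∑ i, g i • β i⟫_ℂ = 0 := by rw [hg, inner_zero_right]
    rw [inner_sum] at this
    simpa [inner_smul_right, hbi] using this
  -- span β = span α
  have hle : Submodule.span ℂ (Set.range β) ≤ Submodule.span ℂ (Set.range α) := by
    rw [Submodule.span_le]
    rintro _ ⟨k, rfl⟩
    exact hβmem k
  have hfd : FiniteDimensional ℂ (Submodule.span ℂ (Set.range α)) :=
    FiniteDimensional.span_of_finite ℂ (Set.finite_range α)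
  have hspan_eq : Submodule.span ℂ (Set.range β) = Submodule.span ℂ (Set.range α) := by
    apply Submodule.eq_of_le_of_finrank_eq hle
    rw [finrank_span_eq_card hβli, finrank_span_eq_card hli]
  -- f - P f is orthogonal to each β k
  have h1 : ∀ k, ⟪β k, f - ∑ n, ⟪β n, f⟫_ℂ • α n⟫_ℂ = 0 := by
    intro k
    rw [inner_sub_right, inner_sum]
    simp [inner_smul_right, hbi']
  -- hence orthogonal to each α m
  have h3 : ∀ m, ⟪α m, f - ∑ n, ⟪β n, f⟫_ℂ • α n⟫_ℂ = 0 := by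
    intro m
    have hm : α m ∈ Submodule.span ℂ (Set.range β) := by
      rw [hspan_eq]
      exact Submodule.subset_span ⟨m, rfl⟩
    obtain ⟨d, hd⟩ := (Submodule.mem_span_range_iff_exists_fun ℂ).mp hm
    rw [← hd, sum_inner]
    simp [inner_smul_left, h1]
  -- key identity
  have hβjr : β j = ∑ n, ⟪β n, β j⟫_ℂ • α n := hrepr (β j) (hβmem j)
  have hw := boomp_aux α j f (fun n => ⟪β n, f⟫_ℂ) (fun n => ⟪β n, β j⟫_ℂ)
    ((‖β j‖ : ℂ) ^ 2) hnorm hjj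
  rw [← hβjr] at hw
  rw [hw]
  intro v hv
  induction hv using Submodule.span_induction with
  | mem x hx =>
    obtain ⟨m, hm, rfl⟩ := hx
    rw [inner_add_right, h3, inner_smul_right, hbi, if_neg hm]
    simp
  | zero => simp
  | add x y _ _ hx hy => rw [inner_add_left, hx, hy, add_zero]
  | smul c x _ hx => rw [inner_smul_left, hx, mul_zero]
end

section
/- (Lemma 2 / optimality) With the notation of Lemma 1, the vector f̃ = Σ_{n≠j} c̃_n α_n, where c̃_n = c_n − c_j ⟨β_n, β_j⟩ / ‖β_j‖², is the unique minimizer of ‖f − g‖ over g ∈ Ṽ = span{α_n : n ≠ j}; i.e. f̃ is the orthogonal projection of f onto Ṽ. -/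
open scoped InnerProductSpace
open Finset

-- helper: inner-zero extends from generators to span (first argument)
lemma inner_left_span_zero {H : Type*} [NormedAddCommGroup H] [InnerProductSpace ℂ H]
    {s : Set H} {v : H} (h : ∀ u ∈ s, ⟪u, v⟫_ℂ = 0) :
    ∀ u ∈ Submodule.span ℂ s, ⟪u, v⟫_ℂ = 0 := by
  intro u hu
  induction hu using Submodule.span_induction with
  | mem x hx => exact h x hx
  | zero => simp
  | add x y _ _ hx hy => rw [inner_add_left, hx, hy, add_zero]
  | smul c x _ hx => rw [inner_smul_left, hx, mul_zero]

theorem boomp_stmt5 {H : Type*} [NormedAddCommGroup H] [InnerProductSpace ℂ H]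
    {N : ℕ} (α β : Fin N → H) (j : Fin N) (f : H)
    (hli : LinearIndependent ℂ α)
    (hβmem : ∀ m, β m ∈ Submodule.span ℂ (Set.range α))
    (hbi : ∀ n m, ⟪α n, β m⟫_ℂ = if n = m then 1 else 0) :
    (∑ n ∈ Finset.univ.erase j,
        (⟪β n, f⟫_ℂ - ⟪β j, f⟫_ℂ * ⟪β n, β j⟫_ℂ / (‖β j‖ : ℂ) ^ 2) • α n)
      ∈ Submodule.span ℂ (α '' {m : Fin N | m ≠ j}) ∧
    (∀ g ∈ Submodule.span ℂ (α '' {m : Fin N | m ≠ j}),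
      ‖f - ∑ n ∈ Finset.univ.erase j,
        (⟪β n, f⟫_ℂ - ⟪β j, f⟫_ℂ * ⟪β n, β j⟫_ℂ / (‖β j‖ : ℂ) ^ 2) • α n‖
        ≤ ‖f - g‖) ∧
    (∀ g ∈ Submodule.span ℂ (α '' {m : Fin N | m ≠ j}),
      ‖f - g‖ = ‖f - ∑ n ∈ Finset.univ.erase j,
        (⟪β n, f⟫_ℂ - ⟪β j, f⟫_ℂ * ⟪β n, β j⟫_ℂ / (‖β j‖ : ℂ) ^ 2) • α n‖ →
      g = ∑ n ∈ Finset.univ.erase j,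
        (⟪β n, f⟫_ℂ - ⟪β j, f⟫_ℂ * ⟪β n, β j⟫_ℂ / (‖β j‖ : ℂ) ^ 2) • α n) := by
  classical
  set c : Fin N → ℂ := fun n => ⟪β n, f⟫_ℂ with hc
  set ftil : H := ∑ n ∈ Finset.univ.erase j,
      (⟪β n, f⟫_ℂ - ⟪β j, f⟫_ℂ * ⟪β n, β j⟫_ℂ / (‖β j‖ : ℂ) ^ 2) • α n with hftil
  -- β j ≠ 0
  have hβj0 : β j ≠ 0 := by
    intro h
    have := hbi j j
    simp [h] at this
  have hnβj : (‖β j‖ : ℂ) ≠ 0 := by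
    simpa using hβj0
  -- conjugate orthonormality
  have hβa : ∀ n k, ⟪β n, α k⟫_ℂ = if k = n then 1 else 0 := by
    intro n k
    rw [← inner_conj_symm, hbi]
    split <;> simp
  -- β is linearly independent
  have hβli : LinearIndependent ℂ β := by
    rw [linearIndependent_iff']
    intro s g hg i hi
    have := congrArg (fun x => ⟪α i, x⟫_ℂ) hg
    simpa [inner_sum, inner_smul_right, hbi, Finset.sum_ite_eq, hi] using this
  -- span β = span α
  have hspan : Submodule.span ℂ (Set.range β) = Submodule.span ℂ (Set.range α) := by
    have hle : Submodule.span ℂ (Set.range β) ≤ Submodule.span ℂ (Set.range α) := by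
      rw [Submodule.span_le]
      rintro x ⟨m, rfl⟩
      exact hβmem m
    have hfd : FiniteDimensional ℂ (Submodule.span ℂ (Set.range α)) :=
      FiniteDimensional.span_of_finite ℂ (Set.finite_range α)
    refine Submodule.eq_of_le_of_finrank_eq hle ?_
    rw [finrank_span_eq_card hβli, finrank_span_eq_card hli]
  -- residual r ⊥ span α
  set r : H := f - ∑ n, c n • α n with hr
  have hrβ : ∀ n, ⟪β n, r⟫_ℂ = 0 := by
    intro n
    rw [hr, inner_sub_right, inner_sum]
    simp only [inner_smul_right, hβa]
    simp [hc]
  have hrα : ∀ m, ⟪α m, r⟫_ℂ = 0 := by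
    intro m
    have hm : α m ∈ Submodule.span ℂ (Set.range β) := by
      rw [hspan]; exact Submodule.subset_span ⟨m, rfl⟩
    refine inner_left_span_zero ?_ _ hm
    rintro u ⟨n, rfl⟩
    exact hrβ n
  -- decomposition of β j
  have hβjdec : β j = ∑ n, ⟪β n, β j⟫_ℂ • α n := by
    obtain ⟨b, hb⟩ := (Submodule.mem_span_range_iff_exists_fun ℂ).1 (hβmem j)
    have hbn : ∀ n, ⟪β n, β j⟫_ℂ = b n := by
      intro n
      rw [← hb, inner_sum]
      simp [inner_smul_right, hβa]
    rw [show (∑ n, ⟪β n, β j⟫_ℂ • α n) = ∑ n, b n • α n from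
      Finset.sum_congr rfl fun n _ => by rw [hbn], hb]
  -- key identity
  set t : ℂ := ⟪β j, f⟫_ℂ / (‖β j‖ : ℂ) ^ 2 with ht
  have hinner_self : ⟪β j, β j⟫_ℂ = (‖β j‖ : ℂ) ^ 2 := by
    rw [inner_self_eq_norm_sq_to_K]; norm_cast
  have htj : t * ⟪β j, β j⟫_ℂ = c j := by
    rw [hinner_self, ht, div_mul_cancel₀]
    exact pow_ne_zero 2 hnβj
  have hkey : f - ftil = r + t • β j := by
    have h1 : t • β j = (t * ⟪β j, β j⟫_ℂ) • α j
        + ∑ n ∈ Finset.univ.erase j, (t * ⟪β n, β j⟫_ℂ) • α n := by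
      conv_lhs => rw [hβjdec]
      rw [Finset.smul_sum, ← Finset.add_sum_erase _ _ (Finset.mem_univ j)]
      simp [smul_smul]
    have h2 : ∑ n, c n • α n = c j • α j + ∑ n ∈ Finset.univ.erase j, c n • α n :=
      (Finset.add_sum_erase _ _ (Finset.mem_univ j)).symm
    rw [hr, h1, htj, h2, hftil]
    have h3 : ∀ n ∈ Finset.univ.erase j,
        (⟪β n, f⟫_ℂ - ⟪β j, f⟫_ℂ * ⟪β n, β j⟫_ℂ / (‖β j‖ : ℂ) ^ 2) • α n
          = c n • α n - (t * ⟪β n, β j⟫_ℂ) • α n := by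
      intro n _
      rw [← sub_smul]
      congr 1
      rw [ht, hc]
      ring
    rw [Finset.sum_congr rfl h3, Finset.sum_sub_distrib]
    abel
  -- orthogonality of f - ftil to the span
  have horth : ∀ g ∈ Submodule.span ℂ (α '' {m : Fin N | m ≠ j}),
      ⟪g, f - ftil⟫_ℂ = 0 := by
    intro g hg
    refine inner_left_span_zero ?_ _ hg
    rintro u ⟨m, hm, rfl⟩
    rw [hkey, inner_add_right, hrα, inner_smul_right, hbi, if_neg hm]
    simp
  -- membership
  have hmem : ftil ∈ Submodule.span ℂ (α '' {m : Fin N | m ≠ j}) := by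
    rw [hftil]
    refine Submodule.sum_smul_mem _ _ fun n hn => Submodule.subset_span ⟨n, ?_, rfl⟩
    exact Finset.ne_of_mem_erase hn
  refine ⟨hmem, ?_, ?_⟩
  · intro g hg
    have hdiff : ftil - g ∈ Submodule.span ℂ (α '' {m : Fin N | m ≠ j}) :=
      Submodule.sub_mem _ hmem hg
    have hsq : ‖f - g‖ ^ 2 = ‖f - ftil‖ ^ 2 + ‖ftil - g‖ ^ 2 := by
      have : f - g = (ftil - g) + (f - ftil) := by abel
      rw [this, norm_add_sq (𝕜 := ℂ), horth _ hdiff]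
      simp [add_comm]
    nlinarith [norm_nonneg (f - g), norm_nonneg (f - ftil), norm_nonneg (ftil - g), hsq]
  · intro g hg heq
    have hdiff : ftil - g ∈ Submodule.span ℂ (α '' {m : Fin N | m ≠ j}) :=
      Submodule.sub_mem _ hmem hg
    have hsq : ‖f - g‖ ^ 2 = ‖f - ftil‖ ^ 2 + ‖ftil - g‖ ^ 2 := by
      have : f - g = (ftil - g) + (f - ftil) := by abel
      rw [this, norm_add_sq (𝕜 := ℂ), horth _ hdiff]
      simp [add_comm]
    have h0 : ‖ftil - g‖ ^ 2 = 0 := by rw [heq] at hsq; linarith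
    have h1 : ftil - g = 0 := norm_eq_zero.1 (by
      have := pow_eq_zero_iff (n := 2) (by norm_num) |>.1 h0
      exact this)
    exact (sub_eq_zero.1 h1).symm
end

section
/- (Theorem 1, residual formula) With the notation of Lemma 1, the residual R_j = P_N f − f̃ (the difference between the orthogonal projections of f onto V_N and onto Ṽ = span{α_n : n ≠ j}) equals c_j β_j / ‖β_j‖², and hence ‖R_j‖² = |c_j|² / ‖β_j‖². -/
open scoped InnerProductSpace
open Finset

/-!
Biorthogonality makes `v ↦ ∑ n, ⟪β n, v⟫ • α n` the identity on `span (range α)`, so `β j`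
expands as `∑ n, ⟪β n, β j⟫ • α n`. The coefficients of `f̃` are those of `P_N f` minus
`c_j / ‖β_j‖²` times those of `β j`, with the `j`-th one removed; since the `j`-th coefficient
of `β j` is `‖β_j‖²`, the difference is exactly `(c_j / ‖β_j‖²) • β j`.
-/

theorem sum_inner_smul_eq_of_mem_span {𝕜 E ι : Type*} [RCLike 𝕜] [NormedAddCommGroup E]
    [InnerProductSpace 𝕜 E] [Fintype ι] [DecidableEq ι] {α β : ι → E}
    (hbi : ∀ n m, ⟪α n, β m⟫_𝕜 = if n = m then 1 else 0)
    {v : E} (hv : v ∈ Submodule.span 𝕜 (Set.range α)) :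
    ∑ n, ⟪β n, v⟫_𝕜 • α n = v := by
  let expand : E →ₗ[𝕜] E := ∑ n, (innerₛₗ 𝕜 (β n)).smulRight (α n)
  have hexpand : ∀ w, expand w = ∑ n, ⟪β n, w⟫_𝕜 • α n := fun w => by
    simp [expand]
  suffices Set.EqOn expand (LinearMap.id : E →ₗ[𝕜] E) (Submodule.span 𝕜 (Set.range α)) by
    rw [← hexpand]; exact this hv
  refine LinearMap.eqOn_span' ?_
  rintro _ ⟨m, rfl⟩
  have hdual : ∀ n, ⟪β n, α m⟫_𝕜 = if m = n then 1 else 0 := fun n => by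
    rw [← inner_conj_symm, hbi]; split_ifs <;> simp
  simp [hexpand, hdual]

theorem sum_sub_sum_erase_eq_smul_sum {K M ι : Type*} [Field K] [AddCommGroup M] [Module K M]
    [Fintype ι] [DecidableEq ι] (α : ι → M) (c d : ι → K) (j : ι) (hd : d j ≠ 0) :
    ∑ n, c n • α n - ∑ n ∈ univ.erase j, (c n - c j * d n / d j) • α n
      = (c j / d j) • ∑ n, d n • α n := by
  have hcoeff : ∀ n ∈ univ.erase j,
      c n • α n - (c n - c j * d n / d j) • α n = (c j / d j) • d n • α n := fun n _ => by
    rw [← sub_smul, smul_smul]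
    congr 1
    ring
  have hj : (c j / d j) • d j • α j = c j • α j := by
    rw [smul_smul, div_mul_cancel₀ _ hd]
  rw [smul_sum, ← add_sum_erase _ _ (mem_univ j), ← add_sum_erase _ _ (mem_univ j), hj,
    ← sum_congr rfl hcoeff, sum_sub_distrib]
  abel

theorem norm_div_norm_sq_smul_sq {𝕜 E : Type*} [RCLike 𝕜] [NormedAddCommGroup E]
    [NormedSpace 𝕜 E] (c : 𝕜) (b : E) :
    ‖(c / (‖b‖ : 𝕜) ^ 2) • b‖ ^ 2 = ‖c‖ ^ 2 / ‖b‖ ^ 2 := by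
  rcases eq_or_ne b 0 with rfl | hb
  · simp
  have hb' : ‖b‖ ≠ 0 := norm_ne_zero_iff.mpr hb
  rw [norm_smul, norm_div, norm_pow, RCLike.norm_ofReal, abs_norm]
  field_simp

theorem boomp_stmt6_general {H : Type*} [NormedAddCommGroup H] [InnerProductSpace ℂ H]
    {N : ℕ} (α β : Fin N → H) (j : Fin N) (f : H)
    (hβmem : ∀ m, β m ∈ Submodule.span ℂ (Set.range α))
    (hbi : ∀ n m, ⟪α n, β m⟫_ℂ = if n = m then 1 else 0) :
    (∑ n, ⟪β n, f⟫_ℂ • α n) -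
        (∑ n ∈ Finset.univ.erase j,
          (⟪β n, f⟫_ℂ - ⟪β j, f⟫_ℂ * ⟪β n, β j⟫_ℂ / (‖β j‖ : ℂ) ^ 2) • α n)
      = (⟪β j, f⟫_ℂ / (‖β j‖ : ℂ) ^ 2) • β j ∧
    ‖(∑ n, ⟪β n, f⟫_ℂ • α n) -
        (∑ n ∈ Finset.univ.erase j,
          (⟪β n, f⟫_ℂ - ⟪β j, f⟫_ℂ * ⟪β n, β j⟫_ℂ / (‖β j‖ : ℂ) ^ 2) • α n)‖ ^ 2
      = ‖⟪β j, f⟫_ℂ‖ ^ 2 / ‖β j‖ ^ 2 := by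
  have hβj : β j ≠ 0 := fun h => by simpa [h] using hbi j j
  have hnorm : ⟪β j, β j⟫_ℂ = (‖β j‖ : ℂ) ^ 2 := inner_self_eq_norm_sq_to_K (β j)
  have hresidual := sum_sub_sum_erase_eq_smul_sum α (fun n => ⟪β n, f⟫_ℂ)
    (fun n => ⟪β n, β j⟫_ℂ) j (by simpa [hnorm] using hβj)
  simp only [hnorm, sum_inner_smul_eq_of_mem_span hbi (hβmem j)] at hresidual
  exact ⟨hresidual, by rw [hresidual]; exact norm_div_norm_sq_smul_sq _ _⟩

theorem boomp_stmt6 {H : Type*} [NormedAddCommGroup H] [InnerProductSpace ℂ H]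
    {N : ℕ} (α β : Fin N → H) (j : Fin N) (f : H)
    (hli : LinearIndependent ℂ α)
    (hβmem : ∀ m, β m ∈ Submodule.span ℂ (Set.range α))
    (hbi : ∀ n m, ⟪α n, β m⟫_ℂ = if n = m then 1 else 0) :
    (∑ n, ⟪β n, f⟫_ℂ • α n) -
        (∑ n ∈ Finset.univ.erase j,
          (⟪β n, f⟫_ℂ - ⟪β j, f⟫_ℂ * ⟪β n, β j⟫_ℂ / (‖β j‖ : ℂ) ^ 2) • α n)
      = (⟪β j, f⟫_ℂ / (‖β j‖ : ℂ) ^ 2) • β j ∧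
    ‖(∑ n, ⟪β n, f⟫_ℂ • α n) -
        (∑ n ∈ Finset.univ.erase j,
          (⟪β n, f⟫_ℂ - ⟪β j, f⟫_ℂ * ⟪β n, β j⟫_ℂ / (‖β j‖ : ℂ) ^ 2) • α n)‖ ^ 2
      = ‖⟪β j, f⟫_ℂ‖ ^ 2 / ‖β j‖ ^ 2 :=
  boomp_stmt6_general α β j f hβmem hbi
end

section
/- (Pythagorean decomposition for the backward step) With the notation of Lemma 1, for every f ∈ H one has ‖f − f̃‖² = ‖f − P_N f‖² + |c_j|² / ‖β_j‖², where P_N f is the orthogonal projection of f onto V_N and f̃ is the orthogonal projection of f onto Ṽ = span{α_n : n ≠ j}. -/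
open scoped InnerProductSpace
open Finset

theorem boomp_stmt7 {H : Type*} [NormedAddCommGroup H] [InnerProductSpace ℂ H]
    {N : ℕ} (α β : Fin N → H) (j : Fin N) (f : H)
    (hli : LinearIndependent ℂ α)
    (hβmem : ∀ m, β m ∈ Submodule.span ℂ (Set.range α))
    (hbi : ∀ n m, ⟪α n, β m⟫_ℂ = if n = m then 1 else 0) :
    ‖f - ∑ n ∈ Finset.univ.erase j,
        (⟪β n, f⟫_ℂ - ⟪β j, f⟫_ℂ * ⟪β n, β j⟫_ℂ / (‖β j‖ : ℂ) ^ 2) • α n‖ ^ 2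
      = ‖f - ∑ n, ⟪β n, f⟫_ℂ • α n‖ ^ 2 + ‖⟪β j, f⟫_ℂ‖ ^ 2 / ‖β j‖ ^ 2 := by
  have hβα : ∀ m n, ⟪β m, α n⟫_ℂ = if n = m then 1 else 0 := by
    intro m n
    rw [← inner_conj_symm, hbi]
    simp [apply_ite (starRingEnd ℂ)]
  have hrep : ∀ (a : Fin N → ℂ) (m : Fin N), ⟪β m, ∑ n, a n • α n⟫_ℂ = a m := by
    intro a m
    rw [inner_sum]
    simp [inner_smul_right, hβα, mul_ite]
  have hβj : β j = ∑ n, ⟪β n, β j⟫_ℂ • α n := by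
    obtain ⟨a, ha⟩ := (Submodule.mem_span_range_iff_exists_fun ℂ).mp (hβmem j)
    have hcoef : ∀ n, ⟪β n, β j⟫_ℂ = a n := by
      intro n; rw [← ha]; exact hrep a n
    simp_rw [hcoef]
    exact ha.symm
  have hnz : ‖β j‖ ≠ 0 := by
    intro h
    have hb0 : β j = 0 := by simpa using h
    have := hbi j j
    simp [hb0] at this
  have hnzc : ((‖β j‖ : ℂ)) ≠ 0 := by exact_mod_cast hnz
  set c : Fin N → ℂ := fun n => ⟪β n, f⟫_ℂ with hc
  have hself : ⟪β j, β j⟫_ℂ = (‖β j‖ : ℂ) ^ 2 := by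
    rw [inner_self_eq_norm_sq_to_K]
    norm_cast
  have hterm : (c j - c j * ⟪β j, β j⟫_ℂ / (‖β j‖ : ℂ) ^ 2) = 0 := by
    rw [hself, mul_div_assoc, div_self (pow_ne_zero 2 hnzc), mul_one, sub_self]
  have hsmul : ∀ k : ℂ, k • β j = ∑ n, (k * ⟪β n, β j⟫_ℂ) • α n := by
    intro k
    conv_lhs => rw [hβj]
    rw [Finset.smul_sum]
    simp [smul_smul]
  have key : ∑ n ∈ Finset.univ.erase j,
      (c n - c j * ⟪β n, β j⟫_ℂ / (‖β j‖ : ℂ) ^ 2) • α n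
      = (∑ n, c n • α n) - (c j / (‖β j‖ : ℂ) ^ 2) • β j := by
    have hsum : ∑ n, (c n - c j * ⟪β n, β j⟫_ℂ / (‖β j‖ : ℂ) ^ 2) • α n
        = (∑ n, c n • α n) - (c j / (‖β j‖ : ℂ) ^ 2) • β j := by
      rw [hsmul (c j / (‖β j‖ : ℂ) ^ 2), ← Finset.sum_sub_distrib]
      refine Finset.sum_congr rfl fun n _ => ?_
      rw [← sub_smul]
      congr 1
      ring
    rw [← Finset.add_sum_erase _ _ (Finset.mem_univ j), hterm, zero_smul, zero_add] at hsum
    exact hsum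
  have hdecomp : f - ∑ n ∈ Finset.univ.erase j,
      (c n - c j * ⟪β n, β j⟫_ℂ / (‖β j‖ : ℂ) ^ 2) • α n
      = (f - ∑ n, c n • α n) + (c j / (‖β j‖ : ℂ) ^ 2) • β j := by
    rw [key]; abel
  have h0 : ⟪β j, f - ∑ n, c n • α n⟫_ℂ = 0 := by
    rw [inner_sub_right, hrep c j]
    simp [hc]
  have horth : ⟪f - ∑ n, c n • α n, (c j / (‖β j‖ : ℂ) ^ 2) • β j⟫_ℂ = (0 : ℂ) := by
    rw [inner_smul_right, ← inner_conj_symm, h0]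
    simp
  have hpyth := norm_add_sq_eq_norm_sq_add_norm_sq_of_inner_eq_zero (𝕜 := ℂ) _ _ horth
  have hpyth2 : ‖(f - ∑ n, c n • α n) + (c j / (‖β j‖ : ℂ) ^ 2) • β j‖ ^ 2
      = ‖f - ∑ n, c n • α n‖ ^ 2 + ‖(c j / (‖β j‖ : ℂ) ^ 2) • β j‖ ^ 2 := by
    simpa only [pow_two] using hpyth
  rw [hdecomp, hpyth2]
  congr 1
  rw [norm_smul]
  have h1 : ‖c j / (‖β j‖ : ℂ) ^ 2‖ = ‖c j‖ / ‖β j‖ ^ 2 := by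
    rw [norm_div, norm_pow, Complex.norm_real, norm_norm]
  rw [h1]
  field_simp
  ring
end

section
/- (Optimality of the BOOMP selection criterion) With the notation of Lemma 1, let f ∈ H and for each j ∈ {1,…,N} let f̃^{(j)} denote the orthogonal projection of f onto span{α_n : n ≠ j}. Then ‖f − f̃^{(j)}‖ is minimized over j exactly at those indices minimizing |c_j|² / ‖β_j‖², where c_j = ⟨β_j, f⟩. -/
/-!
Write `V = span {α n}`, `S_j = span {α n : n ≠ j}` and `P` for the orthogonal projection onto `V`.
Then `f - f̃⁽ʲ⁾ = (f - P f) + (P f - f̃⁽ʲ⁾)` is an orthogonal decomposition, and `P f - f̃⁽ʲ⁾` lies in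
`V ∩ S_jᗮ`, which biorthogonality forces to be the line through `β j`. Pairing with `β j` identifies
that component as `c_j / ‖β_j‖²` times `β j`, so
`‖f - f̃⁽ʲ⁾‖² = ‖f - P f‖² + |c_j|² / ‖β_j‖²`, and only the second term depends on `j`.
-/

open scoped InnerProductSpace
open Finset

namespace Submodule

variable {𝕜 E : Type*} [RCLike 𝕜] [NormedAddCommGroup E] [InnerProductSpace 𝕜 E]

theorem mem_orthogonal_span_iff {s : Set E} {v : E} :
    v ∈ (span 𝕜 s)ᗮ ↔ ∀ u ∈ s, ⟪u, v⟫_𝕜 = 0 := by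
  rw [← span_singleton_le_iff_mem, ← isOrtho_iff_le, isOrtho_comm, isOrtho_iff_le, span_le]
  exact forall₂_congr fun u _ => mem_orthogonal_singleton_iff_inner_left

end Submodule

namespace Biorthogonal

open Submodule

variable {𝕜 E ι : Type*} [RCLike 𝕜] [NormedAddCommGroup E] [InnerProductSpace 𝕜 E] [DecidableEq ι]
  {α β : ι → E} (hbi : ∀ n m, ⟪α n, β m⟫_𝕜 = if n = m then 1 else 0)
include hbi

theorem ne_zero (j : ι) : β j ≠ 0 := by
  intro h
  simpa [h] using hbi j j

theorem mem_orthogonal_span_ne (j : ι) : β j ∈ (span 𝕜 (α '' {n | n ≠ j}))ᗮ := by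
  rw [mem_orthogonal_span_iff]
  rintro _ ⟨n, hn, rfl⟩
  exact (hbi n j).trans (if_neg hn)

theorem eq_inner_smul_of_mem_span_of_mem_orthogonal
    (hβmem : ∀ m, β m ∈ span 𝕜 (Set.range α)) {j : ι} {u : E}
    (hu : u ∈ span 𝕜 (Set.range α)) (hu' : u ∈ (span 𝕜 (α '' {n | n ≠ j}))ᗮ) :
    u = ⟪α j, u⟫_𝕜 • β j := by
  have hw : u - ⟪α j, u⟫_𝕜 • β j ∈ (span 𝕜 (Set.range α))ᗮ := by
    rw [mem_orthogonal_span_iff]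
    rintro _ ⟨n, rfl⟩
    rw [inner_sub_right, inner_smul_right, hbi n j]
    by_cases hn : n = j
    · simp [hn]
    · simp [hn, inner_right_of_mem_orthogonal (subset_span (Set.mem_image_of_mem α hn)) hu']
  have hw' : u - ⟪α j, u⟫_𝕜 • β j ∈ span 𝕜 (Set.range α) :=
    sub_mem hu (smul_mem _ _ (hβmem j))
  simpa [sub_eq_zero] using (inf_orthogonal_eq_bot _).le ⟨hw', hw⟩

theorem norm_sub_sq_eq_of_mem_orthogonal [(span 𝕜 (Set.range α)).HasOrthogonalProjection]
    (hβmem : ∀ m, β m ∈ span 𝕜 (Set.range α)) {j : ι} {f g : E}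
    (hg : g ∈ span 𝕜 (α '' {n | n ≠ j})) (hfg : f - g ∈ (span 𝕜 (α '' {n | n ≠ j}))ᗮ) :
    ‖f - g‖ ^ 2 =
      ‖f - (span 𝕜 (Set.range α)).starProjection f‖ ^ 2 + ‖⟪β j, f⟫_𝕜‖ ^ 2 / ‖β j‖ ^ 2 := by
  set V := span 𝕜 (Set.range α)
  set S := span 𝕜 (α '' {n | n ≠ j})
  have hSV : S ≤ V := span_mono (Set.image_subset_range _ _)
  have hr : f - V.starProjection f ∈ Vᗮ := V.sub_starProjection_mem_orthogonal f
  set u := V.starProjection f - g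
  have huV : u ∈ V := sub_mem (V.starProjection_apply_mem f) (hSV hg)
  have huS : u ∈ Sᗮ := by
    rw [show u = (f - g) - (f - V.starProjection f) by simp only [u]; abel]
    exact sub_mem hfg (orthogonal_le hSV hr)
  have hcu : ⟪β j, u⟫_𝕜 = ⟪β j, f⟫_𝕜 := by
    rw [show f = (f - V.starProjection f) + u + g by simp only [u]; abel, inner_add_right,
      inner_add_right, inner_right_of_mem_orthogonal (hβmem j) hr,
      inner_left_of_mem_orthogonal hg (mem_orthogonal_span_ne hbi j), zero_add, add_zero]
  have hu : ‖u‖ * ‖β j‖ = ‖⟪β j, f⟫_𝕜‖ := by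
    rw [← hcu, eq_inner_smul_of_mem_span_of_mem_orthogonal hbi hβmem huV huS, inner_smul_right,
      inner_self_eq_norm_sq_to_K, norm_mul, norm_smul, norm_pow, RCLike.norm_ofReal, abs_norm]
    ring
  have hpyth := norm_add_sq_eq_norm_sq_add_norm_sq_of_inner_eq_zero _ _
    (inner_left_of_mem_orthogonal huV hr)
  rw [show f - g = (f - V.starProjection f) + u by simp only [u]; abel, sq, sq, hpyth, ← hu,
    mul_pow, mul_div_cancel_right₀ _ (pow_ne_zero 2 (norm_ne_zero_iff.2 (ne_zero hbi j)))]
  ring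

end Biorthogonal

theorem boomp_stmt8_general {H : Type*} [NormedAddCommGroup H] [InnerProductSpace ℂ H]
    {N : ℕ} (α β : Fin N → H) (f : H) (ft : Fin N → H)
    (hβmem : ∀ m, β m ∈ Submodule.span ℂ (Set.range α))
    (hbi : ∀ n m, ⟪α n, β m⟫_ℂ = if n = m then 1 else 0)
    (hftmem : ∀ j, ft j ∈ Submodule.span ℂ (α '' {n : Fin N | n ≠ j}))
    (hftorth : ∀ j, ∀ v ∈ Submodule.span ℂ (α '' {n : Fin N | n ≠ j}),
      ⟪v, f - ft j⟫_ℂ = 0) :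
    ∀ j : Fin N,
      (∀ k, ‖f - ft j‖ ≤ ‖f - ft k‖) ↔
      (∀ k, ‖⟪β j, f⟫_ℂ‖ ^ 2 / ‖β j‖ ^ 2 ≤ ‖⟪β k, f⟫_ℂ‖ ^ 2 / ‖β k‖ ^ 2) := by
  intro j
  have := FiniteDimensional.span_of_finite ℂ (Set.finite_range α)
  have key k := Biorthogonal.norm_sub_sq_eq_of_mem_orthogonal hbi hβmem (hftmem k)
    ((Submodule.mem_orthogonal _ _).2 (hftorth k))
  refine forall_congr' fun k => ?_
  rw [← pow_le_pow_iff_left₀ (norm_nonneg _) (norm_nonneg _) two_ne_zero, key j, key k,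
    add_le_add_iff_left]

theorem boomp_stmt8 {H : Type*} [NormedAddCommGroup H] [InnerProductSpace ℂ H]
    {N : ℕ} (α β : Fin N → H) (f : H) (ft : Fin N → H)
    (hli : LinearIndependent ℂ α)
    (hβmem : ∀ m, β m ∈ Submodule.span ℂ (Set.range α))
    (hbi : ∀ n m, ⟪α n, β m⟫_ℂ = if n = m then 1 else 0)
    (hftmem : ∀ j, ft j ∈ Submodule.span ℂ (α '' {n : Fin N | n ≠ j}))
    (hftorth : ∀ j, ∀ v ∈ Submodule.span ℂ (α '' {n : Fin N | n ≠ j}),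
      ⟪v, f - ft j⟫_ℂ = 0) :
    ∀ j : Fin N,
      (∀ k, ‖f - ft j‖ ≤ ‖f - ft k‖) ↔
      (∀ k, ‖⟪β j, f⟫_ℂ‖ ^ 2 / ‖β j‖ ^ 2 ≤ ‖⟪β k, f⟫_ℂ‖ ^ 2 / ‖β k‖ ^ 2) :=
  boomp_stmt8_general α β f ft hβmem hbi hftmem hftorth
end

section
/- (Backward-step projector formula) With the notation of Lemma 1, the orthogonal projection onto Ṽ = span{α_n : n ≠ j} is given by P̃ g = Σ_{n≠j} ⟨β̃_n, g⟩ α_n, where β̃_n = β_n − β_j⟨β_j, β_n⟩/‖β_j‖²; equivalently P̃ = P_N − (⟨β_j, ·⟩/‖β_j‖²) β_j, where P_N g = Σ_{n=1}^N ⟨β_n, g⟩ α_n. -/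
open scoped InnerProductSpace
open Finset

theorem boomp_stmt19 {H : Type*} [NormedAddCommGroup H] [InnerProductSpace ℂ H]
    {N : ℕ} (α β : Fin N → H) (j : Fin N)
    (hli : LinearIndependent ℂ α)
    (hβmem : ∀ m, β m ∈ Submodule.span ℂ (Set.range α))
    (hbi : ∀ n m, ⟪α n, β m⟫_ℂ = if n = m then 1 else 0) :
    ∀ g : H,
      (∑ n ∈ Finset.univ.erase j,
          ⟪β n - (⟪β j, β n⟫_ℂ / (‖β j‖ : ℂ) ^ 2) • β j, g⟫_ℂ • α n)
        ∈ Submodule.span ℂ (α '' {n : Fin N | n ≠ j}) ∧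
      (∀ v ∈ Submodule.span ℂ (α '' {n : Fin N | n ≠ j}),
        ⟪v, g - ∑ n ∈ Finset.univ.erase j,
          ⟪β n - (⟪β j, β n⟫_ℂ / (‖β j‖ : ℂ) ^ 2) • β j, g⟫_ℂ • α n⟫_ℂ = 0) ∧
      (∑ n ∈ Finset.univ.erase j,
          ⟪β n - (⟪β j, β n⟫_ℂ / (‖β j‖ : ℂ) ^ 2) • β j, g⟫_ℂ • α n)
        = (∑ n, ⟪β n, g⟫_ℂ • α n) - (⟪β j, g⟫_ℂ / (‖β j‖ : ℂ) ^ 2) • β j := by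
  intro g
  set B : Fin N → H := fun n => β n - (⟪β j, β n⟫_ℂ / (‖β j‖ : ℂ) ^ 2) • β j with hB
  have hBn : ∀ n, β n - (⟪β j, β n⟫_ℂ / (‖β j‖ : ℂ) ^ 2) • β j = B n := fun n => rfl
  simp only [hBn]
  -- basic facts
  have hbi' : ∀ n m, ⟪β n, α m⟫_ℂ = if m = n then 1 else 0 := by
    intro n m
    rw [← inner_conj_symm, hbi]
    split <;> simp
  have hβjne : β j ≠ 0 := by
    intro h
    have := hbi j j
    simp [h] at this
  have hβjself : (⟪β j, β j⟫_ℂ) = (‖β j‖ : ℂ) ^ 2 := by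
    rw [inner_self_eq_norm_sq_to_K]
    norm_cast
  have hnorm : ((‖β j‖ : ℂ)) ^ 2 ≠ 0 := by
    simp [hβjne]
  -- reconstruction on the span
  have h1 : ∀ v ∈ Submodule.span ℂ (Set.range α), (∑ n, ⟪β n, v⟫_ℂ • α n) = v := by
    intro v hv
    induction hv using Submodule.span_induction with
    | mem x hx =>
      obtain ⟨m, rfl⟩ := hx
      simp [hbi', ite_smul]
    | zero => simp
    | add x y hx hy ihx ihy =>
      simp only [inner_add_right, add_smul, Finset.sum_add_distrib, ihx, ihy]
    | smul a x hx ih =>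
      simp only [inner_smul_right, mul_smul, ← Finset.smul_sum, ih]
  have hβjB : ∀ n, ⟪β j, B n⟫_ℂ = 0 := by
    intro n
    simp [hB, inner_sub_right, inner_smul_right, hβjself, div_mul_cancel₀ _ hnorm]
  have hαB : ∀ n m, n ≠ j → ⟪α n, B m⟫_ℂ = if n = m then 1 else 0 := by
    intro n m hn
    simp [hB, inner_sub_right, inner_smul_right, hbi, hn]
  have hBα : ∀ n m, n ≠ j → ⟪B m, α n⟫_ℂ = if n = m then 1 else 0 := by
    intro n m hn
    rw [← inner_conj_symm, hαB n m hn]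
    split <;> simp
  have hBmemall : ∀ n, B n ∈ Submodule.span ℂ (Set.range α) := fun n =>
    Submodule.sub_mem _ (hβmem n) (Submodule.smul_mem _ _ (hβmem j))
  have hBmem : ∀ n, B n ∈ Submodule.span ℂ (α '' {m : Fin N | m ≠ j}) := by
    intro n
    have hrec := h1 _ (hBmemall n)
    rw [← hrec, ← Finset.sum_erase_add _ _ (Finset.mem_univ j), hβjB n, zero_smul, add_zero]
    exact Submodule.sum_mem _ fun m hm =>
      Submodule.smul_mem _ _ (Submodule.subset_span ⟨m, Finset.ne_of_mem_erase hm, rfl⟩)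
  -- Part 1
  have part1 : (∑ n ∈ Finset.univ.erase j, ⟪B n, g⟫_ℂ • α n)
      ∈ Submodule.span ℂ (α '' {n : Fin N | n ≠ j}) :=
    Submodule.sum_mem _ fun n hn =>
      Submodule.smul_mem _ _ (Submodule.subset_span ⟨n, Finset.ne_of_mem_erase hn, rfl⟩)
  -- Part 3
  have part3 : (∑ n ∈ Finset.univ.erase j, ⟪B n, g⟫_ℂ • α n)
      = (∑ n, ⟪β n, g⟫_ℂ • α n) - (⟪β j, g⟫_ℂ / (‖β j‖ : ℂ) ^ 2) • β j := by
    have hβjrec : (∑ n, ⟪β n, β j⟫_ℂ • α n) = β j := h1 _ (hβmem j)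
    have hβjrec' : (∑ n ∈ Finset.univ.erase j, ⟪β n, β j⟫_ℂ • α n)
        = β j - ((‖β j‖ : ℂ) ^ 2) • α j := by
      have h := Finset.sum_erase_add Finset.univ (fun n => ⟪β n, β j⟫_ℂ • α n) (Finset.mem_univ j)
      simp only [hβjrec, hβjself] at h
      exact eq_sub_iff_add_eq.2 h
    have expand : ∀ n, ⟪B n, g⟫_ℂ
        = ⟪β n, g⟫_ℂ - (⟪β j, g⟫_ℂ / (‖β j‖ : ℂ) ^ 2) * ⟪β n, β j⟫_ℂ := by
      intro n
      simp only [hB, inner_sub_left, inner_smul_left, map_div₀, map_pow, Complex.conj_ofReal,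
        inner_conj_symm]
      ring
    have step : (∑ n ∈ Finset.univ.erase j, ⟪B n, g⟫_ℂ • α n)
        = (∑ n ∈ Finset.univ.erase j, ⟪β n, g⟫_ℂ • α n)
          - (⟪β j, g⟫_ℂ / (‖β j‖ : ℂ) ^ 2) • (∑ n ∈ Finset.univ.erase j, ⟪β n, β j⟫_ℂ • α n) := by
      rw [Finset.smul_sum, ← Finset.sum_sub_distrib]
      refine Finset.sum_congr rfl fun n _ => ?_
      rw [expand, sub_smul, smul_smul]
    rw [step, hβjrec',
      ← Finset.sum_erase_add Finset.univ (fun n => ⟪β n, g⟫_ℂ • α n) (Finset.mem_univ j),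
      smul_sub, smul_smul, div_mul_cancel₀ _ hnorm]
    abel
  -- Part 2
  have hBperp : ∀ m, m ≠ j →
      ⟪B m, g - ∑ n ∈ Finset.univ.erase j, ⟪B n, g⟫_ℂ • α n⟫_ℂ = 0 := by
    intro m hm
    rw [inner_sub_right, inner_sum]
    rw [Finset.sum_eq_single_of_mem m (Finset.mem_erase.2 ⟨hm, Finset.mem_univ m⟩)]
    · rw [inner_smul_right, hBα m m hm, if_pos rfl, mul_one, sub_self]
    · intro n hn hne
      rw [inner_smul_right, hBα n m (Finset.ne_of_mem_erase hn), if_neg hne, mul_zero]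
  have hBli : LinearIndependent ℂ (fun m : {m : Fin N // m ≠ j} => B m) := by
    rw [linearIndependent_iff']
    intro s f hsum i hi
    have h2 := congrArg (fun v => ⟪α (i : Fin N), v⟫_ℂ) hsum
    simp only [inner_sum, inner_smul_right, inner_zero_right] at h2
    rw [Finset.sum_eq_single_of_mem i hi] at h2
    · rwa [hαB i i i.2, if_pos rfl, mul_one] at h2
    · intro m hm hne
      rw [hαB i m i.2, if_neg (fun h => hne (Subtype.ext h).symm), mul_zero]
  have hαli' : LinearIndependent ℂ (fun m : {m : Fin N // m ≠ j} => α m) :=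
    hli.comp _ Subtype.val_injective
  have hrange : α '' {n : Fin N | n ≠ j} = Set.range (fun m : {m : Fin N // m ≠ j} => α m) :=
    Set.image_eq_range α {n : Fin N | n ≠ j}
  have hfd : FiniteDimensional ℂ (Submodule.span ℂ (α '' {n : Fin N | n ≠ j})) :=
    FiniteDimensional.span_of_finite ℂ ((Set.toFinite _).image α)
  have hle : Submodule.span ℂ (Set.range (fun m : {m : Fin N // m ≠ j} => B m))
      ≤ Submodule.span ℂ (α '' {n : Fin N | n ≠ j}) := by
    rw [Submodule.span_le]
    rintro _ ⟨m, rfl⟩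
    exact hBmem m
  have hspan_eq : Submodule.span ℂ (Set.range (fun m : {m : Fin N // m ≠ j} => B m))
      = Submodule.span ℂ (α '' {n : Fin N | n ≠ j}) := by
    apply Submodule.eq_of_le_of_finrank_le hle
    rw [hrange, finrank_span_eq_card hBli, finrank_span_eq_card hαli']
  have part2 : ∀ v ∈ Submodule.span ℂ (α '' {n : Fin N | n ≠ j}),
      ⟪v, g - ∑ n ∈ Finset.univ.erase j, ⟪B n, g⟫_ℂ • α n⟫_ℂ = 0 := by
    intro v hv
    rw [← hspan_eq] at hv
    induction hv using Submodule.span_induction with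
    | mem x hx =>
      obtain ⟨m, rfl⟩ := hx
      exact hBperp m m.2
    | zero => simp
    | add x y _ _ ihx ihy => rw [inner_add_left, ihx, ihy, add_zero]
    | smul a x _ ih => rw [inner_smul_left, ih, mul_zero]
  exact ⟨part1, part2, part3⟩
end
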